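/- arXiv:1212.1713 — 2 statements merged into one kernel-verified Lean document; each statement's English description precedes it below -/
import Mathlib

section
/- Let Ω ⊆ ℝ³ be open, and let ρ : Ω → ℝ with ρ > 0, u = (u₁,u₂,u₃) : Ω → ℝ³ with u₁ > 0, and φ : Ω → ℝ be C¹ functions satisfying the steady Euler–Poisson continuity equation ∂₁(ρu₁)+∂₂(ρu₂)+∂₃(ρu₃) = 0 and momentum equations ∂₁(ρu_iu₁)+∂₂(ρu_iu₂)+∂₃(ρu_iu₃)+∂_i(p(ρ)) = ρ∂_iφ for i = 1,2,3. Set s = ln ρ, β₂ = u₂/u₁, β₃ = u₃/u₁, c²(ρ) = p'(ρ), and B = ½(u₁²+u₂²+u₃²) + h(ρ) − φ. Then the following four equations hold on Ω: (i) ∂₁s + β₂∂₂s + β₃∂₃s − (c²(ρ)/u₁²)∂₁s + ∂₂β₂ + ∂₃β₃ = −(1/u₁²)∂₁φ; (ii) ∂₁β₂ + β₂∂₂β₂ + β₃∂₃β₂ − (c²(ρ)/u₁²)β₂∂₁s + (c²(ρ)/u₁²)∂₂s + (β₂/u₁²)∂₁φ − (1/u₁²)∂₂φ = 0; (iii) ∂₁β₃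 + β₂∂₂β₃ + β₃∂₃β₃ − (c²(ρ)/u₁²)β₃∂₁s + (c²(ρ)/u₁²)∂₃s + (β₃/u₁²)∂₁φ − (1/u₁²)∂₃φ = 0; (iv) ∂₁B + β₂∂₂B + β₃∂₃B = 0. -/
/-!
Expanding the conservative equations with the product rule and subtracting `uᵢ` times the
continuity equation puts the momentum equations in transport form
`ρ (u·∇)uᵢ + p'(ρ) ∂ᵢρ = ρ ∂ᵢφ`. The four identities are then pointwise algebra:
(i) is the continuity equation divided by `ρ u₁`, with `u₂∂₂u₁ + u₃∂₃u₁` eliminated through the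
first momentum equation; (ii) and (iii) follow from `u₁ (u·∇)βₖ = (u·∇)uₖ - βₖ (u·∇)u₁`; and (iv)
is `∑ uᵢ · (i-th momentum equation)`, because `h'(ρ) = p'(ρ)/ρ` makes `(u·∇)h(ρ) = p'(ρ) (u·∇)s`.
-/

open Real Set MeasureTheory

/-- The `i`-th partial derivative of a function on `ℝ³`. -/
noncomputable def pd (i : Fin 3) (f : (Fin 3 → ℝ) → ℝ) (x : Fin 3 → ℝ) : ℝ :=
  fderiv ℝ f x (Pi.single i 1)

/-- The slope `β₂ = u₂/u₁`. -/
noncomputable def beta2 (u1 u2 : (Fin 3 → ℝ) → ℝ) : (Fin 3 → ℝ) → ℝ :=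
  fun x => u2 x / u1 x

/-- The slope `β₃ = u₃/u₁`. -/
noncomputable def beta3 (u1 u3 : (Fin 3 → ℝ) → ℝ) : (Fin 3 → ℝ) → ℝ :=
  fun x => u3 x / u1 x

/-- The Bernoulli function `B = ½(u₁²+u₂²+u₃²) + h(ρ) − φ`. -/
noncomputable def Bfun (ρ u1 u2 u3 φ : (Fin 3 → ℝ) → ℝ) (h : ℝ → ℝ) :
    (Fin 3 → ℝ) → ℝ :=
  fun x => (1 / 2) * ((u1 x) ^ 2 + (u2 x) ^ 2 + (u3 x) ^ 2) + h (ρ x) - φ x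

/-- `s = ln ρ`. -/
noncomputable def Sfun (ρ : (Fin 3 → ℝ) → ℝ) : (Fin 3 → ℝ) → ℝ :=
  fun x => Real.log (ρ x)

section PartialDerivatives

variable {f g : (Fin 3 → ℝ) → ℝ} {x : Fin 3 → ℝ}

theorem HasFDerivAt.pd_eq {f' : (Fin 3 → ℝ) →L[ℝ] ℝ} (hf : HasFDerivAt f f' x) (i : Fin 3) :
    pd i f x = f' (Pi.single i 1) := by
  rw [pd, hf.fderiv]

theorem pd_mul (hf : DifferentiableAt ℝ f x) (hg : DifferentiableAt ℝ g x) (i : Fin 3) :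
    pd i (fun y => f y * g y) x = pd i f x * g x + f x * pd i g x := by
  rw [(hf.hasFDerivAt.fun_mul hg.hasFDerivAt).pd_eq, pd, pd]
  simp only [add_apply, smul_apply, smul_eq_mul]
  ring

theorem pd_comp_of_hasDerivAt {φ : ℝ → ℝ} {c : ℝ} (hφ : HasDerivAt φ c (f x))
    (hf : DifferentiableAt ℝ f x) (i : Fin 3) :
    pd i (fun y => φ (f y)) x = c * pd i f x :=
  (hφ.comp_hasFDerivAt x hf.hasFDerivAt).pd_eq i

theorem pd_div (hf : DifferentiableAt ℝ f x) (hg : DifferentiableAt ℝ g x) (hgx : g x ≠ 0)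
    (i : Fin 3) :
    pd i (fun y => f y / g y) x = (pd i f x * g x - f x * pd i g x) / g x ^ 2 := by
  simp only [div_eq_mul_inv]
  rw [pd_mul (g := fun y => (g y)⁻¹) hf (hg.inv hgx), pd_comp_of_hasDerivAt (hasDerivAt_inv hgx) hg]
  field_simp
  ring

end PartialDerivatives

section EulerPoisson

variable {ρ u1 u2 u3 φ : (Fin 3 → ℝ) → ℝ} {x : Fin 3 → ℝ}

theorem pd_Sfun (hρ : DifferentiableAt ℝ ρ x) (hρ0 : ρ x ≠ 0) (i : Fin 3) :
    pd i (Sfun ρ) x = pd i ρ x / ρ x :=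
  (pd_comp_of_hasDerivAt (Real.hasDerivAt_log hρ0) hρ i).trans (inv_mul_eq_div _ _)

theorem pd_Bfun {h : ℝ → ℝ} {d : ℝ} (hρ : DifferentiableAt ℝ ρ x)
    (hu1 : DifferentiableAt ℝ u1 x) (hu2 : DifferentiableAt ℝ u2 x)
    (hu3 : DifferentiableAt ℝ u3 x) (hφ : DifferentiableAt ℝ φ x) (hh : HasDerivAt h d (ρ x))
    (i : Fin 3) :
    pd i (Bfun ρ u1 u2 u3 φ h) x = u1 x * pd i u1 x + u2 x * pd i u2 x + u3 x * pd i u3 x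
      + d * pd i ρ x - pd i φ x := by
  have hB : HasFDerivAt (Bfun ρ u1 u2 u3 φ h) _ x :=
    (((((hu1.hasFDerivAt.pow 2).add (hu2.hasFDerivAt.pow 2)).add
      (hu3.hasFDerivAt.pow 2)).const_mul (1 / 2)).add
      (hh.comp_hasFDerivAt x hρ.hasFDerivAt)).sub hφ.hasFDerivAt
  rw [hB.pd_eq]
  simp only [one_div, Nat.add_one_sub_one, pow_one, nsmul_eq_mul, Nat.cast_ofNat, smul_add,
    sub_apply, add_apply, smul_apply, smul_eq_mul, pd, sub_left_inj, add_left_inj]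
  ring

theorem mass_flux_expand (hρ : DifferentiableAt ℝ ρ x)
    (hu1 : DifferentiableAt ℝ u1 x) (hu2 : DifferentiableAt ℝ u2 x)
    (hu3 : DifferentiableAt ℝ u3 x)
    (hcont : pd 0 (fun y => ρ y * u1 y) x + pd 1 (fun y => ρ y * u2 y) x
        + pd 2 (fun y => ρ y * u3 y) x = 0) :
    u1 x * pd 0 ρ x + u2 x * pd 1 ρ x + u3 x * pd 2 ρ x
      + ρ x * (pd 0 u1 x + pd 1 u2 x + pd 2 u3 x) = 0 := by
  rw [pd_mul hρ hu1, pd_mul hρ hu2, pd_mul hρ hu3] at hcont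
  linear_combination hcont

theorem momentum_nonconservative {v : (Fin 3 → ℝ) → ℝ} {p : ℝ → ℝ} {c : ℝ} {k : Fin 3}
    (hρ : DifferentiableAt ℝ ρ x) (hu1 : DifferentiableAt ℝ u1 x)
    (hu2 : DifferentiableAt ℝ u2 x) (hu3 : DifferentiableAt ℝ u3 x)
    (hv : DifferentiableAt ℝ v x) (hp : HasDerivAt p c (ρ x))
    (hcont : pd 0 (fun y => ρ y * u1 y) x + pd 1 (fun y => ρ y * u2 y) x
        + pd 2 (fun y => ρ y * u3 y) x = 0)
    (hmom : pd 0 (fun y => ρ y * v y * u1 y) x + pd 1 (fun y => ρ y * v y * u2 y) x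
        + pd 2 (fun y => ρ y * v y * u3 y) x + pd k (fun y => p (ρ y)) x
        = ρ x * pd k φ x) :
    ρ x * (u1 x * pd 0 v x + u2 x * pd 1 v x + u3 x * pd 2 v x) + c * pd k ρ x
      = ρ x * pd k φ x := by
  have hρv : DifferentiableAt ℝ (fun y => ρ y * v y) x := hρ.mul hv
  rw [pd_mul hρv hu1, pd_mul hρv hu2, pd_mul hρv hu3, pd_mul hρ hv, pd_mul hρ hv, pd_mul hρ hv,
    pd_comp_of_hasDerivAt hp hρ] at hmom
  have hmass := mass_flux_expand hρ hu1 hu2 hu3 hcont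
  linear_combination hmom - v x * hmass

variable {c : ℝ}

theorem log_density_eq (hρ : DifferentiableAt ℝ ρ x) (hu1 : DifferentiableAt ℝ u1 x)
    (hu2 : DifferentiableAt ℝ u2 x) (hu3 : DifferentiableAt ℝ u3 x) (hρ0 : ρ x ≠ 0)
    (hu10 : u1 x ≠ 0)
    (hcont : pd 0 (fun y => ρ y * u1 y) x + pd 1 (fun y => ρ y * u2 y) x
        + pd 2 (fun y => ρ y * u3 y) x = 0)
    (hM1 : ρ x * (u1 x * pd 0 u1 x + u2 x * pd 1 u1 x + u3 x * pd 2 u1 x) + c * pd 0 ρ x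
      = ρ x * pd 0 φ x) :
    pd 0 (Sfun ρ) x + beta2 u1 u2 x * pd 1 (Sfun ρ) x + beta3 u1 u3 x * pd 2 (Sfun ρ) x
        - (c / u1 x ^ 2) * pd 0 (Sfun ρ) x + pd 1 (beta2 u1 u2) x + pd 2 (beta3 u1 u3) x
      = -(1 / u1 x ^ 2) * pd 0 φ x := by
  have hmass := mass_flux_expand hρ hu1 hu2 hu3 hcont
  unfold beta2 beta3
  simp only [pd_Sfun hρ hρ0, pd_div hu2 hu1 hu10, pd_div hu3 hu1 hu10]
  field_simp
  linear_combination u1 x * hmass - hM1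

theorem slope_transport {v : (Fin 3 → ℝ) → ℝ} {k : Fin 3} (hρ : DifferentiableAt ℝ ρ x)
    (hu1 : DifferentiableAt ℝ u1 x) (hv : DifferentiableAt ℝ v x) (hρ0 : ρ x ≠ 0)
    (hu10 : u1 x ≠ 0)
    (hM1 : ρ x * (u1 x * pd 0 u1 x + u2 x * pd 1 u1 x + u3 x * pd 2 u1 x) + c * pd 0 ρ x
      = ρ x * pd 0 φ x)
    (hMv : ρ x * (u1 x * pd 0 v x + u2 x * pd 1 v x + u3 x * pd 2 v x) + c * pd k ρ x
      = ρ x * pd k φ x) :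
    pd 0 (fun y => v y / u1 y) x + beta2 u1 u2 x * pd 1 (fun y => v y / u1 y) x
        + beta3 u1 u3 x * pd 2 (fun y => v y / u1 y) x
        - (c / u1 x ^ 2) * (v x / u1 x) * pd 0 (Sfun ρ) x + (c / u1 x ^ 2) * pd k (Sfun ρ) x
        + (v x / u1 x / u1 x ^ 2) * pd 0 φ x - (1 / u1 x ^ 2) * pd k φ x = 0 := by
  unfold beta2 beta3
  simp only [pd_Sfun hρ hρ0, pd_div hv hu1 hu10]
  field_simp
  linear_combination u1 x * hMv - v x * hM1

theorem bernoulli_transport {h : ℝ → ℝ} (hρ : DifferentiableAt ℝ ρ x)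
    (hu1 : DifferentiableAt ℝ u1 x) (hu2 : DifferentiableAt ℝ u2 x)
    (hu3 : DifferentiableAt ℝ u3 x) (hφ : DifferentiableAt ℝ φ x) (hρ0 : ρ x ≠ 0)
    (hu10 : u1 x ≠ 0) (hh : HasDerivAt h (c / ρ x) (ρ x))
    (hM1 : ρ x * (u1 x * pd 0 u1 x + u2 x * pd 1 u1 x + u3 x * pd 2 u1 x) + c * pd 0 ρ x
      = ρ x * pd 0 φ x)
    (hM2 : ρ x * (u1 x * pd 0 u2 x + u2 x * pd 1 u2 x + u3 x * pd 2 u2 x) + c * pd 1 ρ x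
      = ρ x * pd 1 φ x)
    (hM3 : ρ x * (u1 x * pd 0 u3 x + u2 x * pd 1 u3 x + u3 x * pd 2 u3 x) + c * pd 2 ρ x
      = ρ x * pd 2 φ x) :
    pd 0 (Bfun ρ u1 u2 u3 φ h) x + beta2 u1 u2 x * pd 1 (Bfun ρ u1 u2 u3 φ h) x
      + beta3 u1 u3 x * pd 2 (Bfun ρ u1 u2 u3 φ h) x = 0 := by
  simp only [pd_Bfun hρ hu1 hu2 hu3 hφ hh, beta2, beta3]
  field_simp
  linear_combination u1 x * hM1 + u2 x * hM2 + u3 x * hM3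

end EulerPoisson

theorem new_formulation_general
    (Ω : Set (Fin 3 → ℝ)) (hΩ : IsOpen Ω)
    (ρ u1 u2 u3 φ : (Fin 3 → ℝ) → ℝ)
    (p p' h : ℝ → ℝ)
    (hρpos : ∀ x ∈ Ω, 0 < ρ x)
    (hu1pos : ∀ x ∈ Ω, 0 < u1 x)
    (hρ : ContDiffOn ℝ 1 ρ Ω) (hu1 : ContDiffOn ℝ 1 u1 Ω)
    (hu2 : ContDiffOn ℝ 1 u2 Ω) (hu3 : ContDiffOn ℝ 1 u3 Ω)
    (hφ : ContDiffOn ℝ 1 φ Ω)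
    (hp : ∀ r : ℝ, 0 < r → HasDerivAt p (p' r) r)
    (hh : ∀ r : ℝ, 0 < r → HasDerivAt h (p' r / r) r)
    (hcont : ∀ x ∈ Ω,
      pd 0 (fun y => ρ y * u1 y) x + pd 1 (fun y => ρ y * u2 y) x
        + pd 2 (fun y => ρ y * u3 y) x = 0)
    (hmom1 : ∀ x ∈ Ω,
      pd 0 (fun y => ρ y * u1 y * u1 y) x + pd 1 (fun y => ρ y * u1 y * u2 y) x
        + pd 2 (fun y => ρ y * u1 y * u3 y) x + pd 0 (fun y => p (ρ y)) x
        = ρ x * pd 0 φ x)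
    (hmom2 : ∀ x ∈ Ω,
      pd 0 (fun y => ρ y * u2 y * u1 y) x + pd 1 (fun y => ρ y * u2 y * u2 y) x
        + pd 2 (fun y => ρ y * u2 y * u3 y) x + pd 1 (fun y => p (ρ y)) x
        = ρ x * pd 1 φ x)
    (hmom3 : ∀ x ∈ Ω,
      pd 0 (fun y => ρ y * u3 y * u1 y) x + pd 1 (fun y => ρ y * u3 y * u2 y) x
        + pd 2 (fun y => ρ y * u3 y * u3 y) x + pd 2 (fun y => p (ρ y)) x
        = ρ x * pd 2 φ x) :
    ∀ x ∈ Ω,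
      (pd 0 (Sfun ρ) x + beta2 u1 u2 x * pd 1 (Sfun ρ) x + beta3 u1 u3 x * pd 2 (Sfun ρ) x
          - (p' (ρ x) / (u1 x) ^ 2) * pd 0 (Sfun ρ) x
          + pd 1 (beta2 u1 u2) x + pd 2 (beta3 u1 u3) x
        = -(1 / (u1 x) ^ 2) * pd 0 φ x)
      ∧ (pd 0 (beta2 u1 u2) x + beta2 u1 u2 x * pd 1 (beta2 u1 u2) x
          + beta3 u1 u3 x * pd 2 (beta2 u1 u2) x
          - (p' (ρ x) / (u1 x) ^ 2) * beta2 u1 u2 x * pd 0 (Sfun ρ) x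
          + (p' (ρ x) / (u1 x) ^ 2) * pd 1 (Sfun ρ) x
          + (beta2 u1 u2 x / (u1 x) ^ 2) * pd 0 φ x - (1 / (u1 x) ^ 2) * pd 1 φ x = 0)
      ∧ (pd 0 (beta3 u1 u3) x + beta2 u1 u2 x * pd 1 (beta3 u1 u3) x
          + beta3 u1 u3 x * pd 2 (beta3 u1 u3) x
          - (p' (ρ x) / (u1 x) ^ 2) * beta3 u1 u3 x * pd 0 (Sfun ρ) x
          + (p' (ρ x) / (u1 x) ^ 2) * pd 2 (Sfun ρ) x
          + (beta3 u1 u3 x / (u1 x) ^ 2) * pd 0 φ x - (1 / (u1 x) ^ 2) * pd 2 φ x = 0)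
      ∧ (pd 0 (Bfun ρ u1 u2 u3 φ h) x + beta2 u1 u2 x * pd 1 (Bfun ρ u1 u2 u3 φ h) x
          + beta3 u1 u3 x * pd 2 (Bfun ρ u1 u2 u3 φ h) x = 0) := by
  intro x hx
  have hdiff {f : (Fin 3 → ℝ) → ℝ} (hf : ContDiffOn ℝ 1 f Ω) : DifferentiableAt ℝ f x :=
    (hf.contDiffAt (hΩ.mem_nhds hx)).differentiableAt one_ne_zero
  have dρ := hdiff hρ
  have du1 := hdiff hu1
  have du2 := hdiff hu2
  have du3 := hdiff hu3
  have hρ0 := (hρpos x hx).ne'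
  have hu10 := (hu1pos x hx).ne'
  have hpx := hp (ρ x) (hρpos x hx)
  have hM1 := momentum_nonconservative dρ du1 du2 du3 du1 hpx (hcont x hx) (hmom1 x hx)
  have hM2 := momentum_nonconservative dρ du1 du2 du3 du2 hpx (hcont x hx) (hmom2 x hx)
  have hM3 := momentum_nonconservative dρ du1 du2 du3 du3 hpx (hcont x hx) (hmom3 x hx)
  exact ⟨log_density_eq dρ du1 du2 du3 hρ0 hu10 (hcont x hx) hM1,
    slope_transport dρ du1 du2 hρ0 hu10 hM1 hM2,
    slope_transport dρ du1 du3 hρ0 hu10 hM1 hM3,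
    bernoulli_transport dρ du1 du2 du3 (hdiff hφ) hρ0 hu10 (hh (ρ x) (hρpos x hx)) hM1 hM2 hM3⟩

/-- The new formulation of the steady Euler–Poisson system in the variables
`(s, β₂, β₃, B, φ)`. -/
theorem new_formulation
    (Ω : Set (Fin 3 → ℝ)) (hΩ : IsOpen Ω)
    (ρ u1 u2 u3 φ : (Fin 3 → ℝ) → ℝ)
    (p p' h : ℝ → ℝ)
    (hρpos : ∀ x ∈ Ω, 0 < ρ x)
    (hu1pos : ∀ x ∈ Ω, 0 < u1 x)
    (hρ : ContDiffOn ℝ 1 ρ Ω) (hu1 : ContDiffOn ℝ 1 u1 Ω)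
    (hu2 : ContDiffOn ℝ 1 u2 Ω) (hu3 : ContDiffOn ℝ 1 u3 Ω)
    (hφ : ContDiffOn ℝ 1 φ Ω)
    (hpC : ContDiffOn ℝ 1 p (Set.Ioi 0))
    (hp : ∀ r : ℝ, 0 < r → HasDerivAt p (p' r) r)
    (hh : ∀ r : ℝ, 0 < r → HasDerivAt h (p' r / r) r)
    (hcont : ∀ x ∈ Ω,
      pd 0 (fun y => ρ y * u1 y) x + pd 1 (fun y => ρ y * u2 y) x
        + pd 2 (fun y => ρ y * u3 y) x = 0)
    (hmom1 : ∀ x ∈ Ω,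
      pd 0 (fun y => ρ y * u1 y * u1 y) x + pd 1 (fun y => ρ y * u1 y * u2 y) x
        + pd 2 (fun y => ρ y * u1 y * u3 y) x + pd 0 (fun y => p (ρ y)) x
        = ρ x * pd 0 φ x)
    (hmom2 : ∀ x ∈ Ω,
      pd 0 (fun y => ρ y * u2 y * u1 y) x + pd 1 (fun y => ρ y * u2 y * u2 y) x
        + pd 2 (fun y => ρ y * u2 y * u3 y) x + pd 1 (fun y => p (ρ y)) x
        = ρ x * pd 1 φ x)
    (hmom3 : ∀ x ∈ Ω,
      pd 0 (fun y => ρ y * u3 y * u1 y) x + pd 1 (fun y => ρ y * u3 y * u2 y) x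
        + pd 2 (fun y => ρ y * u3 y * u3 y) x + pd 2 (fun y => p (ρ y)) x
        = ρ x * pd 2 φ x) :
    ∀ x ∈ Ω,
      (pd 0 (Sfun ρ) x + beta2 u1 u2 x * pd 1 (Sfun ρ) x + beta3 u1 u3 x * pd 2 (Sfun ρ) x
          - (p' (ρ x) / (u1 x) ^ 2) * pd 0 (Sfun ρ) x
          + pd 1 (beta2 u1 u2) x + pd 2 (beta3 u1 u3) x
        = -(1 / (u1 x) ^ 2) * pd 0 φ x)
      ∧ (pd 0 (beta2 u1 u2) x + beta2 u1 u2 x * pd 1 (beta2 u1 u2) x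
          + beta3 u1 u3 x * pd 2 (beta2 u1 u2) x
          - (p' (ρ x) / (u1 x) ^ 2) * beta2 u1 u2 x * pd 0 (Sfun ρ) x
          + (p' (ρ x) / (u1 x) ^ 2) * pd 1 (Sfun ρ) x
          + (beta2 u1 u2 x / (u1 x) ^ 2) * pd 0 φ x - (1 / (u1 x) ^ 2) * pd 1 φ x = 0)
      ∧ (pd 0 (beta3 u1 u3) x + beta2 u1 u2 x * pd 1 (beta3 u1 u3) x
          + beta3 u1 u3 x * pd 2 (beta3 u1 u3) x
          - (p' (ρ x) / (u1 x) ^ 2) * beta3 u1 u3 x * pd 0 (Sfun ρ) x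
          + (p' (ρ x) / (u1 x) ^ 2) * pd 2 (Sfun ρ) x
          + (beta3 u1 u3 x / (u1 x) ^ 2) * pd 0 φ x - (1 / (u1 x) ^ 2) * pd 2 φ x = 0)
      ∧ (pd 0 (Bfun ρ u1 u2 u3 φ h) x + beta2 u1 u2 x * pd 1 (Bfun ρ u1 u2 u3 φ h) x
          + beta3 u1 u3 x * pd 2 (Bfun ρ u1 u2 u3 φ h) x = 0) :=
  new_formulation_general Ω hΩ ρ u1 u2 u3 φ p p' h hρpos hu1pos hρ hu1 hu2 hu3 hφ hp hh hcont hmom1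
    hmom2 hmom3
end

section
/- Let I ⊆ ℝ be an interval, b₀, J ∈ ℝ, and let p : (0,∞) → ℝ be C¹. Suppose ρ : I → ℝ and E : I → ℝ are differentiable with ρ > 0 on I, and satisfy the one-dimensional steady Euler–Poisson system: (d/dx)(p(ρ(x)) + J²/ρ(x)) = ρ(x)E(x) and E'(x) = ρ(x) − b₀ for all x ∈ I. Let H : (0,∞) → ℝ be any differentiable function with H'(r) = ((r − b₀)/r)·(p'(r) − J²/r²) for all r > 0. Then the function x ↦ ½E(x)² − H(ρ(x)) is constant on I. -/
/-!
Along a solution, the chain rule applied to the momentum equation gives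
`q'(ρ) ρ' = ρ E` for `q(r) = p(r) + J²/r`. Since `H' = (r - b₀)/r · q'`, this turns
`(H ∘ ρ)'` into `(ρ - b₀) E`, which by the Poisson equation is `(½E²)'`. The derivative of
`½E² − H(ρ)` therefore vanishes on the interval, so it is constant there.
-/

theorem Convex.eq_of_hasDerivWithinAt_zero {G : Type*} [NormedAddCommGroup G] [NormedSpace ℝ G]
    {s : Set ℝ} {f : ℝ → G} (hs : Convex ℝ s) (hf : ∀ x ∈ s, HasDerivWithinAt f 0 s x)
    {x y : ℝ} (hx : x ∈ s) (hy : y ∈ s) : f x = f y := by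
  have h := hs.norm_image_sub_le_of_norm_hasDerivWithin_le hf (C := 0) (by simp) hy hx
  rw [zero_mul, norm_le_zero_iff, sub_eq_zero] at h
  exact h

theorem HasDerivAt.add_const_div {p : ℝ → ℝ} {p' r : ℝ} (hp : HasDerivAt p p' r) (hr : r ≠ 0)
    (c : ℝ) : HasDerivAt (fun s => p s + c / s) (p' - c / r ^ 2) r := by
  have hinv : HasDerivAt (fun s => c / s) (c * -(r ^ 2)⁻¹) r := by
    simpa only [div_eq_mul_inv] using (hasDerivAt_inv hr).const_mul c
  exact (hp.add hinv).congr_deriv (by ring)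

theorem hasDerivWithinAt_half_sq_sub_comp_eq_zero {s : Set ℝ} {x b₀ q' : ℝ}
    {q H ρ E : ℝ → ℝ} (hs : UniqueDiffWithinAt ℝ s x) (hρx : ρ x ≠ 0)
    (hρ : DifferentiableWithinAt ℝ ρ s x) (hq : HasDerivAt q q' (ρ x))
    (hqρ : HasDerivWithinAt (fun y => q (ρ y)) (ρ x * E x) s x)
    (hE : HasDerivWithinAt E (ρ x - b₀) s x)
    (hH : HasDerivAt H ((ρ x - b₀) / ρ x * q') (ρ x)) :
    HasDerivWithinAt (fun y => 1 / 2 * E y ^ 2 - H (ρ y)) 0 s x := by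
  set d := derivWithin ρ s x
  have hρd : HasDerivWithinAt ρ d s x := hρ.hasDerivWithinAt
  have hmom : q' * d = ρ x * E x := hs.eq_deriv _ (hq.comp_hasDerivWithinAt x hρd) hqρ
  have hHρ : HasDerivWithinAt (fun y => H (ρ y)) ((ρ x - b₀) * E x) s x := by
    refine (hH.comp_hasDerivWithinAt x hρd).congr_deriv ?_
    calc (ρ x - b₀) / ρ x * q' * d = (ρ x - b₀) / ρ x * (ρ x * E x) := by rw [← hmom]; ring
      _ = (ρ x - b₀) * E x := by field_simp
  refine (((hE.pow 2).const_mul (1 / 2 : ℝ)).sub hHρ).congr_deriv ?_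
  push_cast
  ring

theorem phase_plane_invariant_general
    (I : Set ℝ) (hI : I.OrdConnected)
    (b₀ J : ℝ) (p p' H : ℝ → ℝ)
    (hp : ∀ r : ℝ, 0 < r → HasDerivAt p (p' r) r)
    (ρ E : ℝ → ℝ)
    (hρpos : ∀ x ∈ I, 0 < ρ x)
    (hρdiff : ∀ x ∈ I, DifferentiableWithinAt ℝ ρ I x)
    (hmom : ∀ x ∈ I,
      HasDerivWithinAt (fun y => p (ρ y) + J ^ 2 / ρ y) (ρ x * E x) I x)
    (hE : ∀ x ∈ I, HasDerivWithinAt E (ρ x - b₀) I x)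
    (hH : ∀ r : ℝ, 0 < r →
      HasDerivAt H ((r - b₀) / r * (p' r - J ^ 2 / r ^ 2)) r) :
    ∀ x ∈ I, ∀ y ∈ I,
      (1 / 2) * (E x) ^ 2 - H (ρ x) = (1 / 2) * (E y) ^ 2 - H (ρ y) := by
  intro x hx y hy
  rcases I.subsingleton_or_nontrivial with hsub | hnt
  · rw [hsub hx hy]
  have hconv : Convex ℝ I := hI.convex
  have hud : UniqueDiffOn ℝ I :=
    uniqueDiffOn_convex hconv (hconv.nontrivial_iff_nonempty_interior.mp hnt)
  refine hconv.eq_of_hasDerivWithinAt_zero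
    (f := fun z => 1 / 2 * E z ^ 2 - H (ρ z)) (fun z hz => ?_) hx hy
  have hρz := hρpos z hz
  exact hasDerivWithinAt_half_sq_sub_comp_eq_zero (hud z hz) hρz.ne' (hρdiff z hz)
    ((hp _ hρz).add_const_div hρz.ne' _) (hmom z hz) (hE z hz) (hH _ hρz)

/-- Trajectory invariant in the `(ρ,E)`-phase plane for the 1-D steady Euler–Poisson
system: `½E² − H(ρ)` is constant along solutions. -/
theorem phase_plane_invariant
    (I : Set ℝ) (hI : I.OrdConnected)
    (b₀ J : ℝ) (p p' H : ℝ → ℝ)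
    (hpC : ContDiffOn ℝ 1 p (Set.Ioi 0))
    (hp : ∀ r : ℝ, 0 < r → HasDerivAt p (p' r) r)
    (ρ E : ℝ → ℝ)
    (hρpos : ∀ x ∈ I, 0 < ρ x)
    (hρdiff : ∀ x ∈ I, DifferentiableWithinAt ℝ ρ I x)
    (hEdiff : ∀ x ∈ I, DifferentiableWithinAt ℝ E I x)
    (hmom : ∀ x ∈ I,
      HasDerivWithinAt (fun y => p (ρ y) + J ^ 2 / ρ y) (ρ x * E x) I x)
    (hE : ∀ x ∈ I, HasDerivWithinAt E (ρ x - b₀) I x)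
    (hH : ∀ r : ℝ, 0 < r →
      HasDerivAt H ((r - b₀) / r * (p' r - J ^ 2 / r ^ 2)) r) :
    ∀ x ∈ I, ∀ y ∈ I,
      (1 / 2) * (E x) ^ 2 - H (ρ x) = (1 / 2) * (E y) ^ 2 - H (ρ y) :=
  phase_plane_invariant_general I hI b₀ J p p' H hp ρ E hρpos hρdiff hmom hE hH
end
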